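/- Let a, b : ℤ₊² → ℝ with a_{n,m} > 0 and b_{n,m} > 0 for n,m ≥ 1, and suppose a_{n+1,m}·b_{n+1,m+1} = b_{n,m+1}·a_{n+1,m+1} for all n,m ≥ 0. Then there exists a family h : ℤ₊² → ℝ with h_{0,0} = 1, h_{n,m} ≠ 0, satisfying h_{n+1,m}² = 2 a_{n+1,m} h_{n,m}² and h_{n,m+1}² = 2 b_{n,m+1} h_{n,m}² for all n,m. -/
import Mathlib


theorem stmt_3 (a b : ℕ → ℕ → ℝ)
    (ha : ∀ n m, 1 ≤ n → 0 < a n m)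
    (hb : ∀ n m, 1 ≤ m → 0 < b n m)
    (hcompat : ∀ n m, a (n+1) m * b (n+1) (m+1) = b n (m+1) * a (n+1) (m+1)) :
    ∃ h : ℕ → ℕ → ℝ, h 0 0 = 1 ∧ (∀ n m, h n m ≠ 0) ∧
      (∀ n m, (h (n+1) m) ^ 2 = 2 * a (n+1) m * (h n m) ^ 2) ∧
      (∀ n m, (h n (m+1)) ^ 2 = 2 * b n (m+1) * (h n m) ^ 2) := by
  set P : ℕ → ℝ := fun n => ∏ i ∈ Finset.range n, (2 * a (i+1) 0) with hP
  set Q : ℕ → ℕ → ℝ := fun n m => ∏ j ∈ Finset.range m, (2 * b n (j+1)) with hQ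
  set g : ℕ → ℕ → ℝ := fun n m => P n * Q n m with hg
  have hgpos : ∀ n m, 0 < g n m := by
    intro n m
    apply mul_pos
    · exact Finset.prod_pos fun i _ => by have := ha (i+1) 0 (Nat.le_add_left 1 i); linarith
    · exact Finset.prod_pos fun j _ => by have := hb n (j+1) (Nat.le_add_left 1 j); linarith
  have hgv : ∀ n m, g n (m+1) = 2 * b n (m+1) * g n m := by
    intro n m
    simp only [hg, hQ, Finset.prod_range_succ]
    ring
  have key : ∀ n m, a (n+1) 0 * Q (n+1) m = a (n+1) m * Q n m := by
    intro n m
    induction m with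
    | zero => simp [hQ]
    | succ m ih =>
      simp only [hQ] at ih ⊢
      rw [Finset.prod_range_succ, Finset.prod_range_succ, ← mul_assoc, ih]
      have := hcompat n m
      linear_combination (2 * ∏ j ∈ Finset.range m, 2 * b n (j + 1)) * this
  have hgh : ∀ n m, g (n+1) m = 2 * a (n+1) m * g n m := by
    intro n m
    have : P (n+1) = P n * (2 * a (n+1) 0) := by
      simp [hP, Finset.prod_range_succ]
    simp only [hg, this]
    have := key n m
    linear_combination 2 * P n * this
  refine ⟨fun n m => Real.sqrt (g n m), ?_, ?_, ?_, ?_⟩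
  · simp [hg, hP, hQ]
  · intro n m
    exact ne_of_gt (Real.sqrt_pos.mpr (hgpos n m))
  · intro n m
    rw [Real.sq_sqrt (hgpos n m).le, Real.sq_sqrt (hgpos (n+1) m).le]
    exact hgh n m
  · intro n m
    rw [Real.sq_sqrt (hgpos n m).le, Real.sq_sqrt (hgpos n (m+1)).le]
    exact hgv n m
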